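/- Let F be a field of characteristic zero, A = F[x,y], n > 1. Define d¹(a) = (y^n·∂a/∂y, −y^{n-1}·∂a/∂x) and d²(a,b) = y^{n-1}(∂a/∂x + y·∂b/∂y) − (n−1)·y^{n-1}·b. Then the first logarithmic Poisson cohomology Ker(d²)/Im(d¹) is isomorphic as an F-vector space to μ(⊕_{i=0}^{n-2} y^i F[x]) ⊕ (F_{n-1}[y] × 0), where F_{n-1}[y] is the space of polynomials in y of degree ≤ n−1 and μ(b) = (∫((n−1)b − y·∂b/∂y)dx, b). In particular, Ker(d²) = μ(⊕_{i=0}^{n-2} y^i F[x]) ⊕ (F_{n-1}[y] × 0) ⊕ Im(d¹) as an internal direct sum. -/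

import Mathlib

open MvPolynomial

noncomputable section

abbrev PolyA (F : Type*) [Field F] := MvPolynomial (Fin 2) F

/-- Antiderivative in `x` with zero constant-in-`x` term. -/
def antiX (F : Type*) [Field F] : PolyA F →ₗ[F] PolyA F :=
  (Finsupp.lsum F fun m : Fin 2 →₀ ℕ =>
    (((m 0 : F) + 1)⁻¹) •
      (MvPolynomial.monomial (m + Finsupp.single 0 1) : F →ₗ[F] PolyA F))
    ∘ₗ (AddMonoidAlgebra.coeffLinearEquiv F : PolyA F ≃ₗ[F] ((Fin 2 →₀ ℕ) →₀ F)).toLinearMap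

/-- `μ(b) = (∫((n−1)b − y·∂b/∂y) dx, b)` as an `F`-linear map. -/
def mu (F : Type*) [Field F] (n : ℕ) : PolyA F →ₗ[F] PolyA F × PolyA F :=
  LinearMap.prod
    ((antiX F).comp
      (((n : F) - 1) • LinearMap.id -
        (LinearMap.mulLeft F (X 1)).comp (pderiv 1).toLinearMap))
    LinearMap.id

/-- `d¹(a) = (y^n·∂a/∂y, −y^{n-1}·∂a/∂x)` as an `F`-linear map. -/
def d1l (F : Type*) [Field F] (n : ℕ) : PolyA F →ₗ[F] PolyA F × PolyA F :=
  LinearMap.prod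
    ((LinearMap.mulLeft F ((X 1 : PolyA F) ^ n)).comp (pderiv 1).toLinearMap)
    (-((LinearMap.mulLeft F ((X 1 : PolyA F) ^ (n - 1))).comp (pderiv 0).toLinearMap))

/-- `d²(a,b) = y^{n-1}(∂a/∂x + y·∂b/∂y) − (n−1)·y^{n-1}·b` as an `F`-linear map. -/
def d2l (F : Type*) [Field F] (n : ℕ) : PolyA F × PolyA F →ₗ[F] PolyA F :=
  (LinearMap.mulLeft F ((X 1 : PolyA F) ^ (n - 1))).comp
    ((pderiv 0).toLinearMap.comp (LinearMap.fst F (PolyA F) (PolyA F)) +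
      (LinearMap.mulLeft F (X 1 : PolyA F)).comp
        ((pderiv 1).toLinearMap.comp (LinearMap.snd F (PolyA F) (PolyA F))) -
      ((n : F) - 1) • LinearMap.snd F (PolyA F) (PolyA F))

/-- `⊕_{i=0}^{n-2} y^i F[x]`, the subspace of polynomials of `y`-degree at most `n−2`. -/
def lowY (F : Type*) [Field F] (n : ℕ) : Submodule F (PolyA F) :=
  Submodule.span F
    ((fun q : ℕ × ℕ => (X 0 : PolyA F) ^ q.1 * X 1 ^ q.2) '' {q | q.2 ≤ n - 2})

/-- `F_{n-1}[y] × 0`, the polynomials in `y` of degree at most `n−1` in the first factor. -/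
def Fn1y (F : Type*) [Field F] (n : ℕ) : Submodule F (PolyA F × PolyA F) :=
  Submodule.map (LinearMap.inl F (PolyA F) (PolyA F))
    (Submodule.span F ((fun i : ℕ => (X 1 : PolyA F) ^ i) '' {i | i ≤ n - 1}))

/-!
Write `E b = (n-1) b - y ∂b/∂y` (`eulerY`); then `(a, b)` is a cocycle iff `∂a/∂x = E b`, and
the key identity is `E (y^{n-1} f) = -y^n ∂f/∂y`. Split `b = b₀ + y^{n-1} b₁` with `b₀` of
`y`-degree `≤ n-2`. Subtracting `μ(b₀)` and `d¹(-∫ b₁ dx)` leaves a cocycle `(r, 0)`, so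
`∂r/∂x = 0` and `r` is a polynomial in `y` alone; its part of `y`-degree `≥ n` is `y^n ∂c/∂y`
for `c = ∫ r/y^n dy`, the first component of `d¹ c`, and the rest lies in `F_{n-1}[y]`.
The sum is direct because `b₀` has `y`-degree `< n-1` while the second component of `d¹ c` is a
multiple of `y^{n-1}`; once `b₀ = 0`, the same argument with `y^n` kills the `F_{n-1}[y]` part.
-/

section Lattice
variable {R M : Type*} [Ring R] [AddCommGroup M] [Module R M]

theorem Submodule.inf_sup_eq_bot_of_add_add_eq_zero {A B C : Submodule R M}
    (h : ∀ a ∈ A, ∀ b ∈ B, ∀ c ∈ C, a + b + c = 0 → a = 0) : A ⊓ (B ⊔ C) = ⊥ := by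
  refine eq_bot_iff.mpr fun x hx => ?_
  obtain ⟨hxA, hxBC⟩ := Submodule.mem_inf.mp hx
  obtain ⟨b, hb, c, hc, rfl⟩ := Submodule.mem_sup.mp hxBC
  have := h _ (neg_mem hxA) b hb c hc (by abel)
  rwa [neg_eq_zero, ← Submodule.mem_bot R] at this

theorem Submodule.nonempty_quotient_comap_equiv_of_sup_eq {N P K : Submodule R M}
    (hsup : N ⊔ P = K) (hinf : P ⊓ N = ⊥) :
    Nonempty ((K ⧸ Submodule.comap K.subtype P) ≃ₗ[R] N) := by
  subst hsup
  have hbot : Submodule.comap N.subtype N ⊓ Submodule.comap N.subtype P = ⊥ := by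
    rw [← Submodule.comap_inf, inf_comm, hinf, Submodule.comap_bot, Submodule.ker_subtype]
  exact ⟨(LinearMap.quotientInfEquivSupQuotient N P).symm.trans (Submodule.quotEquivOfEqBot _ hbot)⟩

end Lattice

namespace MvPolynomial

theorem exists_eq_add_single_of_ne_zero {σ : Type*} {i : σ} {m : σ →₀ ℕ} (h : m i ≠ 0) :
    ∃ m', m = m' + Finsupp.single i 1 :=
  ⟨m - Finsupp.single i 1, (tsub_add_cancel_of_le (Finsupp.single_le_iff.mpr
    (Nat.one_le_iff_ne_zero.mpr h))).symm⟩

section Derivatives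
variable {σ R : Type*} [CommSemiring R]

theorem pderiv_pderiv_comm (i j : σ) (p : MvPolynomial σ R) :
    pderiv i (pderiv j p) = pderiv j (pderiv i p) := by
  classical
  ext m
  simp only [coeff_pderiv, Finsupp.add_apply, Finsupp.single_apply]
  rcases eq_or_ne i j with rfl | hij
  · rfl
  · simp only [if_neg hij, if_neg hij.symm, add_zero, add_right_comm m]
    ring

theorem X_mul_pderiv_X_pow_mul (i : σ) (k : ℕ) (f : MvPolynomial σ R) :
    X i * pderiv i (X i ^ k * f) =
      (k : MvPolynomial σ R) * (X i ^ k * f) + X i ^ (k + 1) * pderiv i f := by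
  rw [pderiv_mul, pderiv_pow, pderiv_X_self]
  rcases k with _ | k
  · simp
  · simp only [Nat.add_sub_cancel]; push_cast; ring

theorem pderiv_X_pow_mul_of_ne {i j : σ} (h : j ≠ i) (k : ℕ) (f : MvPolynomial σ R) :
    pderiv i (X j ^ k * f) = X j ^ k * pderiv i f := by
  simp [pderiv_X_of_ne h]

theorem X_pow_mul_eq_zero_of_mem_restrictSupport {i : σ} {k : ℕ} {f : MvPolynomial σ R}
    (h : X i ^ k * f ∈ restrictSupport R {m | m i < k}) : X i ^ k * f = 0 := by
  classical
  ext m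
  by_contra hm
  have hlt : m i < k := h (mem_support_iff.mpr hm)
  rw [X_pow_eq_monomial, coeff_monomial_mul', if_neg (by simpa using hlt)] at hm
  exact hm rfl

theorem X_pow_mul_divMonomial_add_modMonomial (i : σ) (k : ℕ) (p : MvPolynomial σ R) :
    X i ^ k * p.divMonomial (Finsupp.single i k) + p.modMonomial (Finsupp.single i k) = p := by
  rw [X_pow_eq_monomial]
  exact divMonomial_add_modMonomial p _

theorem modMonomial_single_mem_restrictSupport (i : σ) (k : ℕ) (p : MvPolynomial σ R) :
    p.modMonomial (Finsupp.single i k) ∈ restrictSupport R {m | m i < k} := by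
  intro m hm
  by_contra hk
  exact mem_support_iff.mp hm
    (coeff_modMonomial_of_le p (Finsupp.single_le_iff.mpr (not_lt.mp hk)))

theorem modMonomial_mem_restrictSupport {S : Set (σ →₀ ℕ)} {p : MvPolynomial σ R}
    (hp : p ∈ restrictSupport R S) (s : σ →₀ ℕ) : p.modMonomial s ∈ restrictSupport R S := by
  rw [mem_restrictSupport_iff] at hp ⊢
  intro m hm
  by_cases hs : s ≤ m
  · exact absurd (coeff_modMonomial_of_le p hs) (mem_support_iff.mp hm)
  · rw [Finset.mem_coe, mem_support_iff, coeff_modMonomial_of_not_le p hs] at hm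
    exact hp (mem_support_iff.mpr hm)

theorem divMonomial_mem_restrictSupport {i : σ} {p : MvPolynomial σ R}
    (hp : p ∈ restrictSupport R {m | m i = 0}) {s : σ →₀ ℕ} (hs : s i = 0) :
    p.divMonomial s ∈ restrictSupport R {m | m i = 0} := by
  rw [mem_restrictSupport_iff] at hp ⊢
  intro m hm
  rw [Finset.mem_coe, mem_support_iff, coeff_divMonomial] at hm
  have : s i + m i = 0 := hp (mem_support_iff.mpr hm)
  simpa [hs] using this

theorem pderiv_eq_zero_of_mem_restrictSupport {i : σ} {p : MvPolynomial σ R}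
    (hp : p ∈ restrictSupport R {m | m i = 0}) : pderiv i p = 0 := by
  ext m
  rw [coeff_pderiv, coeff_zero]
  by_contra h
  rw [mem_restrictSupport_iff] at hp
  have : (m + Finsupp.single i 1 : σ →₀ ℕ) i = 0 := hp (mem_support_iff.mpr (left_ne_zero_of_mul h))
  simp at this

theorem mem_restrictSupport_of_pderiv_eq_zero [NoZeroDivisors R] [CharZero R] {i : σ}
    {p : MvPolynomial σ R} (hp : pderiv i p = 0) : p ∈ restrictSupport R {m | m i = 0} := by
  rw [mem_restrictSupport_iff]
  intro m hm
  by_contra hmi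
  obtain ⟨m', rfl⟩ := exists_eq_add_single_of_ne_zero hmi
  have := congrArg (coeff m') hp
  rw [coeff_pderiv, coeff_zero, mul_eq_zero] at this
  exact this.elim (mem_support_iff.mp hm) (by exact_mod_cast Nat.succ_ne_zero (m' i))

end Derivatives

section Antideriv
variable {σ F : Type*} [Field F]

/-- `antiX F` is `antideriv F 0` by definition. -/
def antideriv (F : Type*) [Field F] (s : σ) : MvPolynomial σ F →ₗ[F] MvPolynomial σ F :=
  (Finsupp.lsum F fun m : σ →₀ ℕ =>
    (((m s : F) + 1)⁻¹) •
      (MvPolynomial.monomial (m + Finsupp.single s 1) : F →ₗ[F] MvPolynomial σ F))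
    ∘ₗ (AddMonoidAlgebra.coeffLinearEquiv F : MvPolynomial σ F ≃ₗ[F] ((σ →₀ ℕ) →₀ F)).toLinearMap

theorem antideriv_monomial (s : σ) (m : σ →₀ ℕ) (c : F) :
    antideriv F s (monomial m c) = ((m s : F) + 1)⁻¹ • monomial (m + Finsupp.single s 1) c := by
  simp [antideriv]

theorem coeff_antideriv_add_single (s : σ) (p : MvPolynomial σ F) (m : σ →₀ ℕ) :
    coeff (m + Finsupp.single s 1) (antideriv F s p) = ((m s : F) + 1)⁻¹ * coeff m p := by
  classical
  induction p using MvPolynomial.induction_on' with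
  | monomial m' c =>
    rw [antideriv_monomial, coeff_smul, coeff_monomial, coeff_monomial]
    by_cases h : m' = m
    · subst h; simp
    · simp [h]
  | add p q hp hq => simp only [map_add, coeff_add, hp, hq, mul_add]

theorem coeff_antideriv_of_eq_zero {s : σ} (p : MvPolynomial σ F) {m : σ →₀ ℕ} (hm : m s = 0) :
    coeff m (antideriv F s p) = 0 := by
  classical
  induction p using MvPolynomial.induction_on' with
  | monomial m' c =>
    rw [antideriv_monomial, coeff_smul, coeff_monomial, if_neg, smul_zero]
    rintro rfl
    simp at hm
  | add p q hp hq => simp only [map_add, coeff_add, hp, hq, add_zero]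

theorem pderiv_antideriv [CharZero F] (s : σ) (p : MvPolynomial σ F) :
    pderiv s (antideriv F s p) = p := by
  ext m
  rw [coeff_pderiv, coeff_antideriv_add_single]
  field_simp

theorem antideriv_mem_restrictSupport {i s : σ} (his : i ≠ s) {p : MvPolynomial σ F}
    (hp : p ∈ restrictSupport F {m | m i = 0}) :
    antideriv F s p ∈ restrictSupport F {m | m i = 0} := by
  classical
  rw [mem_restrictSupport_iff] at hp ⊢
  intro m hm
  rw [Finset.mem_coe, mem_support_iff] at hm
  obtain ⟨m', rfl⟩ := exists_eq_add_single_of_ne_zero fun hs => hm (coeff_antideriv_of_eq_zero p hs)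
  rw [coeff_antideriv_add_single] at hm
  have : m' i = 0 := hp (mem_support_iff.mpr (right_ne_zero_of_mul hm))
  simpa [Finsupp.single_apply, his.symm] using this

end Antideriv

end MvPolynomial

section Poisson
variable {F : Type*} [Field F]

def eulerY (F : Type*) [Field F] (n : ℕ) : PolyA F →ₗ[F] PolyA F :=
  ((n : F) - 1) • LinearMap.id - (LinearMap.mulLeft F (X 1)).comp (pderiv 1).toLinearMap

theorem eulerY_apply (n : ℕ) (b : PolyA F) :
    eulerY F n b = ((n : F) - 1) • b - X 1 * pderiv 1 b := rfl

theorem mu_apply (n : ℕ) (b : PolyA F) : mu F n b = (antideriv F 0 (eulerY F n b), b) := rfl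

theorem d1l_apply (n : ℕ) (c : PolyA F) :
    d1l F n c = (X 1 ^ n * pderiv 1 c, -(X 1 ^ (n - 1) * pderiv 0 c)) := rfl

theorem d2l_apply (n : ℕ) (a b : PolyA F) :
    d2l F n (a, b) = X 1 ^ (n - 1) * (pderiv 0 a - eulerY F n b) := by
  simp [d2l, eulerY_apply]
  ring

theorem mem_ker_d2l_iff {n : ℕ} {a b : PolyA F} :
    (a, b) ∈ LinearMap.ker (d2l F n) ↔ pderiv 0 a = eulerY F n b := by
  rw [LinearMap.mem_ker, d2l_apply, mul_eq_zero, sub_eq_zero,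
    or_iff_right (pow_ne_zero _ (X_ne_zero 1))]

theorem eulerY_X_pow_mul {n : ℕ} (hn : 1 ≤ n) (f : PolyA F) :
    eulerY F n (X 1 ^ (n - 1) * f) = -(X 1 ^ n * pderiv 1 f) := by
  rw [eulerY_apply, X_mul_pderiv_X_pow_mul, Nat.sub_add_cancel hn, Nat.cast_sub hn,
    smul_eq_C_mul]
  simp only [map_sub, map_natCast, map_one, Nat.cast_one]
  ring

theorem monomial_one_eq_X_pow_mul_X_pow (m : Fin 2 →₀ ℕ) :
    monomial m (1 : F) = X 0 ^ m 0 * X 1 ^ m 1 := by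
  rw [X_pow_eq_monomial, X_pow_eq_monomial, monomial_mul, one_mul]
  congr
  ext i
  fin_cases i <;> simp

theorem lowY_eq {n : ℕ} (hn : 1 < n) : lowY F n = restrictSupport F {m | m 1 < n - 1} := by
  apply le_antisymm
  · rw [lowY, Submodule.span_le]
    rintro _ ⟨⟨i, j⟩, hj, rfl⟩
    dsimp only
    rw [SetLike.mem_coe, X_pow_eq_monomial, X_pow_eq_monomial, monomial_mul, one_mul,
      monomial_mem_restrictSupport]
    left
    simp at hj ⊢
    omega
  · rw [restrictSupport_eq_span, Submodule.span_le]
    rintro _ ⟨m, hm, rfl⟩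
    dsimp only
    rw [monomial_one_eq_X_pow_mul_X_pow]
    exact Submodule.subset_span ⟨(m 0, m 1), by simp at hm ⊢; omega, rfl⟩

theorem Fn1y_eq {n : ℕ} (hn : 1 ≤ n) :
    Fn1y F n = (restrictSupport F {m | m 0 = 0 ∧ m 1 < n}).map (LinearMap.inl F _ _) := by
  rw [Fn1y]
  congr 1
  apply le_antisymm
  · rw [Submodule.span_le]
    rintro _ ⟨j, hj, rfl⟩
    dsimp only
    rw [SetLike.mem_coe, X_pow_eq_monomial, monomial_mem_restrictSupport]
    left
    simp at hj ⊢
    omega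
  · rw [restrictSupport_eq_span, Submodule.span_le]
    rintro _ ⟨m, ⟨hm₀, hm₁⟩, rfl⟩
    dsimp only
    rw [monomial_one_eq_X_pow_mul_X_pow, hm₀, pow_zero, one_mul]
    exact Submodule.subset_span ⟨m 1, by simp; omega, rfl⟩

theorem mu_mem_ker_d2l [CharZero F] (n : ℕ) (b : PolyA F) :
    mu F n b ∈ LinearMap.ker (d2l F n) := by
  rw [mu_apply, mem_ker_d2l_iff, pderiv_antideriv]

theorem inl_mem_ker_d2l {n : ℕ} {p : PolyA F} (hp : pderiv 0 p = 0) :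
    LinearMap.inl F _ _ p ∈ LinearMap.ker (d2l F n) := by
  rw [LinearMap.inl_apply, mem_ker_d2l_iff, hp, map_zero]

theorem d1l_mem_ker_d2l {n : ℕ} (hn : 1 ≤ n) (c : PolyA F) :
    d1l F n c ∈ LinearMap.ker (d2l F n) := by
  rw [d1l_apply, mem_ker_d2l_iff, map_neg, eulerY_X_pow_mul hn, neg_neg,
    pderiv_X_pow_mul_of_ne one_ne_zero, pderiv_pderiv_comm]

theorem eq_zero_of_mu_add_Fn1y_add_d1l_eq_zero {n : ℕ} (hn : 1 < n) {x y z : PolyA F × PolyA F}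
    (hx : x ∈ (lowY F n).map (mu F n)) (hy : y ∈ Fn1y F n) (hz : z ∈ LinearMap.range (d1l F n))
    (h : x + y + z = 0) : x = 0 ∧ y = 0 ∧ z = 0 := by
  rw [lowY_eq hn] at hx
  rw [Fn1y_eq hn.le] at hy
  obtain ⟨b, hb, rfl⟩ := hx
  obtain ⟨p, hp, rfl⟩ := hy
  obtain ⟨c, rfl⟩ := hz
  have h₁ := congrArg Prod.fst h
  have h₂ := congrArg Prod.snd h
  simp only [mu_apply, d1l_apply, LinearMap.inl_apply, Prod.fst_add, Prod.snd_add, Prod.fst_zero,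
    Prod.snd_zero, add_zero] at h₁ h₂
  have hb_eq : b = X 1 ^ (n - 1) * pderiv 0 c := by linear_combination h₂
  have hb0 : b = 0 := hb_eq ▸ X_pow_mul_eq_zero_of_mem_restrictSupport (hb_eq ▸ hb)
  have hp_eq : -p = X 1 ^ n * pderiv 1 c := by
    rw [hb0, map_zero, map_zero] at h₁
    linear_combination -h₁
  have hp_mem : -p ∈ restrictSupport F {m | m 1 < n} :=
    neg_mem (restrictSupport_mono (R := F) (fun _ hm => hm.2) hp)
  have hp0 : p = 0 := by
    rw [← neg_eq_zero, hp_eq]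
    exact X_pow_mul_eq_zero_of_mem_restrictSupport (hp_eq ▸ hp_mem)
  rw [hb0, hp0, map_zero, map_zero, zero_add, zero_add] at h
  exact ⟨by rw [hb0, map_zero], by rw [hp0, map_zero], h⟩

theorem exists_eq_add_X_pow_mul_pderiv [CharZero F] (n : ℕ) {r : PolyA F}
    (hr : pderiv 0 r = 0) :
    ∃ p ∈ restrictSupport F {m | m 0 = 0 ∧ m 1 < n}, ∃ c, pderiv 0 c = 0 ∧
      r = p + X 1 ^ n * pderiv 1 c := by
  have hr₀ := mem_restrictSupport_of_pderiv_eq_zero hr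
  refine ⟨r.modMonomial (Finsupp.single 1 n), ?_,
    antideriv F 1 (r.divMonomial (Finsupp.single 1 n)), ?_, ?_⟩
  · exact fun m hm => ⟨modMonomial_mem_restrictSupport hr₀ _ hm,
      modMonomial_single_mem_restrictSupport 1 n r hm⟩
  · exact pderiv_eq_zero_of_mem_restrictSupport
      (antideriv_mem_restrictSupport (by decide) (divMonomial_mem_restrictSupport hr₀ (by simp)))
  · rw [pderiv_antideriv, add_comm, X_pow_mul_divMonomial_add_modMonomial]

theorem ker_d2l_le [CharZero F] {n : ℕ} (hn : 1 < n) :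
    LinearMap.ker (d2l F n) ≤ (lowY F n).map (mu F n) ⊔ Fn1y F n ⊔ LinearMap.range (d1l F n) := by
  rintro ⟨a, b⟩ hab
  rw [mem_ker_d2l_iff] at hab
  set b₁ := b.divMonomial (Finsupp.single 1 (n - 1))
  set b₀ := b.modMonomial (Finsupp.single 1 (n - 1))
  have hb : X 1 ^ (n - 1) * b₁ + b₀ = b := X_pow_mul_divMonomial_add_modMonomial 1 (n - 1) b
  set c₁ := -antideriv F 0 b₁
  have hc₁ : pderiv 0 c₁ = -b₁ := by rw [map_neg, pderiv_antideriv]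
  -- `(r, 0) = (a, b) - μ b₀ - d¹ c₁` is again a cocycle
  set r := a - antideriv F 0 (eulerY F n b₀) - X 1 ^ n * pderiv 1 c₁
  have hr : pderiv 0 r = 0 := by
    have hE := eulerY_X_pow_mul hn.le b₁
    rw [← hb, map_add] at hab
    simp only [r, map_sub, pderiv_antideriv, pderiv_X_pow_mul_of_ne one_ne_zero,
      pderiv_pderiv_comm 0 1 c₁, hc₁, map_neg]
    linear_combination hab + hE
  obtain ⟨p, hp, c₂, hc₂, hr_eq⟩ := exists_eq_add_X_pow_mul_pderiv n hr
  have hdecomp : (a, b) = mu F n b₀ + LinearMap.inl F _ _ p + d1l F n (c₁ + c₂) := by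
    rw [mu_apply, d1l_apply, LinearMap.inl_apply]
    refine Prod.ext ?_ ?_
    · simp only [Prod.fst_add, map_add]
      linear_combination hr_eq
    · simp only [Prod.snd_add, map_add, hc₁, hc₂]
      linear_combination -hb
  have hb₀ : b₀ ∈ lowY F n := by
    rw [lowY_eq hn]
    exact modMonomial_single_mem_restrictSupport 1 (n - 1) b
  rw [hdecomp]
  refine add_mem (add_mem ?_ ?_) ?_
  · exact Submodule.mem_sup_left (Submodule.mem_sup_left (Submodule.mem_map_of_mem hb₀))
  · rw [Fn1y_eq hn.le]
    exact Submodule.mem_sup_left (Submodule.mem_sup_right (Submodule.mem_map_of_mem hp))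
  · exact Submodule.mem_sup_right (LinearMap.mem_range_self _ _)

theorem map_mu_sup_Fn1y_sup_range_d1l_eq_ker [CharZero F] {n : ℕ} (hn : 1 < n) :
    (lowY F n).map (mu F n) ⊔ Fn1y F n ⊔ LinearMap.range (d1l F n) = LinearMap.ker (d2l F n) := by
  refine le_antisymm (sup_le (sup_le ?_ ?_) ?_) (ker_d2l_le hn)
  · rintro _ ⟨b, -, rfl⟩
    exact mu_mem_ker_d2l n b
  · rw [Fn1y_eq hn.le]
    rintro _ ⟨p, hp, rfl⟩
    exact inl_mem_ker_d2l (pderiv_eq_zero_of_mem_restrictSupport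
      (restrictSupport_mono (R := F) (fun _ hm => hm.1) hp))
  · rintro _ ⟨c, rfl⟩
    exact d1l_mem_ker_d2l hn.le c

end Poisson

/-- `Ker d² = μ(⊕_{i=0}^{n-2} y^i F[x]) ⊕ (F_{n-1}[y] × 0) ⊕ Im d¹` as an internal
direct sum, and consequently the first logarithmic Poisson cohomology
`Ker d²/Im d¹` is `F`-linearly isomorphic to `μ(⊕_{i=0}^{n-2} y^i F[x]) ⊕ (F_{n-1}[y] × 0)`. -/
theorem stmt16 (F : Type*) [Field F] [CharZero F] (n : ℕ) (hn : 1 < n) :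
    (Submodule.map (mu F n) (lowY F n) ⊓ (Fn1y F n ⊔ LinearMap.range (d1l F n)) = ⊥) ∧
    (Fn1y F n ⊓ (Submodule.map (mu F n) (lowY F n) ⊔ LinearMap.range (d1l F n)) = ⊥) ∧
    (LinearMap.range (d1l F n) ⊓ (Submodule.map (mu F n) (lowY F n) ⊔ Fn1y F n) = ⊥) ∧
    (Submodule.map (mu F n) (lowY F n) ⊔ Fn1y F n ⊔ LinearMap.range (d1l F n) =
      LinearMap.ker (d2l F n)) ∧
    Nonempty
      ((↥(LinearMap.ker (d2l F n)) ⧸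
          Submodule.comap (LinearMap.ker (d2l F n)).subtype (LinearMap.range (d1l F n)))
        ≃ₗ[F] ↥(Submodule.map (mu F n) (lowY F n) ⊔ Fn1y F n)) := by
  have hsup := map_mu_sup_Fn1y_sup_range_d1l_eq_ker (F := F) hn
  have hinf : LinearMap.range (d1l F n) ⊓ (Submodule.map (mu F n) (lowY F n) ⊔ Fn1y F n) = ⊥ :=
    Submodule.inf_sup_eq_bot_of_add_add_eq_zero fun z hz x hx y hy h =>
      (eq_zero_of_mu_add_Fn1y_add_d1l_eq_zero hn hx hy hz (by rw [← h]; abel)).2.2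
  refine ⟨?_, ?_, hinf, hsup, Submodule.nonempty_quotient_comap_equiv_of_sup_eq hsup hinf⟩
  · exact Submodule.inf_sup_eq_bot_of_add_add_eq_zero fun x hx y hy z hz h =>
      (eq_zero_of_mu_add_Fn1y_add_d1l_eq_zero hn hx hy hz h).1
  · exact Submodule.inf_sup_eq_bot_of_add_add_eq_zero fun y hy x hx z hz h =>
      (eq_zero_of_mu_add_Fn1y_add_d1l_eq_zero hn hx hy hz (by rw [← h]; abel)).2.1
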